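/- arXiv:2407.00422 — 5 statements merged into one kernel-verified Lean document; each statement's English description precedes it below -/
import Mathlib

section
/- For angles α₁, α₂, α₃, α₄ each in (-π, π) with α₁ + α₂ + α₃ + α₄ = 2π, and tᵢ = tan(αᵢ/2), the quantity q := t₁t₂ + t₁t₃ + t₂t₃ - 1 is positive and t₄ = (t₁ + t₂ + t₃ - t₁t₂t₃)/q. -/
open Real

/-!
Write `x, y, z, w` for the half angles, so `x + y + z + w = π` and all four cosines are positive.
Expanding `cos (x + y + z) = -cos w` and `sin (x + y + z) = sin w` and dividing out
`cos x * cos y * cos z` expresses `cos w` and `sin w` as that positive product times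
`q = t₁t₂ + t₁t₃ + t₂t₃ - 1` and `t₁ + t₂ + t₃ - t₁t₂t₃` respectively. Positivity of `cos w`
forces `q > 0`, and the quotient of the two gives `tan w`.
-/

namespace Real

variable {x y z w : ℝ}

theorem cos_add_add_of_cos_ne_zero (hx : cos x ≠ 0) (hy : cos y ≠ 0) (hz : cos z ≠ 0) :
    cos (x + y + z) =
      cos x * cos y * cos z * (1 - (tan x * tan y + tan x * tan z + tan y * tan z)) := by
  simp only [cos_add, sin_add, tan_eq_sin_div_cos]
  field_simp
  ring

theorem sin_add_add_of_cos_ne_zero (hx : cos x ≠ 0) (hy : cos y ≠ 0) (hz : cos z ≠ 0) :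
    sin (x + y + z) =
      cos x * cos y * cos z * (tan x + tan y + tan z - tan x * tan y * tan z) := by
  simp only [cos_add, sin_add, tan_eq_sin_div_cos]
  field_simp
  ring

theorem cos_eq_of_add_add_add_eq_pi (hx : cos x ≠ 0) (hy : cos y ≠ 0) (hz : cos z ≠ 0)
    (hsum : x + y + z + w = π) :
    cos w = cos x * cos y * cos z * (tan x * tan y + tan x * tan z + tan y * tan z - 1) := by
  rw [show w = π - (x + y + z) by linarith, cos_pi_sub, cos_add_add_of_cos_ne_zero hx hy hz]
  ring

theorem sin_eq_of_add_add_add_eq_pi (hx : cos x ≠ 0) (hy : cos y ≠ 0) (hz : cos z ≠ 0)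
    (hsum : x + y + z + w = π) :
    sin w = cos x * cos y * cos z * (tan x + tan y + tan z - tan x * tan y * tan z) := by
  rw [show w = π - (x + y + z) by linarith, sin_pi_sub, sin_add_add_of_cos_ne_zero hx hy hz]

theorem tan_mul_add_tan_mul_add_tan_mul_sub_one_pos (hx : 0 < cos x) (hy : 0 < cos y)
    (hz : 0 < cos z) (hw : 0 < cos w) (hsum : x + y + z + w = π) :
    0 < tan x * tan y + tan x * tan z + tan y * tan z - 1 := by
  rw [cos_eq_of_add_add_add_eq_pi hx.ne' hy.ne' hz.ne' hsum] at hw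
  exact pos_of_mul_pos_right hw (by positivity)

theorem tan_eq_of_add_add_add_eq_pi (hx : cos x ≠ 0) (hy : cos y ≠ 0) (hz : cos z ≠ 0)
    (hsum : x + y + z + w = π) :
    tan w = (tan x + tan y + tan z - tan x * tan y * tan z) /
      (tan x * tan y + tan x * tan z + tan y * tan z - 1) := by
  rw [tan_eq_sin_div_cos, sin_eq_of_add_add_add_eq_pi hx hy hz hsum,
    cos_eq_of_add_add_add_eq_pi hx hy hz hsum, mul_div_mul_left _ _ (by positivity)]

end Real

/-- Four-angle half-angle tangent identity: for angles `αᵢ ∈ (-π, π)` summing to `2π`,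
with `tᵢ = tan (αᵢ/2)`, the quantity `q = t₁t₂ + t₁t₃ + t₂t₃ - 1` is positive and
`t₄ = (t₁ + t₂ + t₃ - t₁t₂t₃) / q`. -/
theorem stmt0 (α : Fin 4 → ℝ) (hα : ∀ i, α i ∈ Set.Ioo (-π) π)
    (hsum : α 0 + α 1 + α 2 + α 3 = 2 * π)
    (t : Fin 4 → ℝ) (ht : ∀ i, t i = Real.tan (α i / 2)) :
    0 < t 0 * t 1 + t 0 * t 2 + t 1 * t 2 - 1 ∧
      t 3 = (t 0 + t 1 + t 2 - t 0 * t 1 * t 2) /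
        (t 0 * t 1 + t 0 * t 2 + t 1 * t 2 - 1) := by
  have hcos : ∀ i, 0 < cos (α i / 2) := fun i =>
    cos_pos_of_mem_Ioo ⟨by linarith [(hα i).1], by linarith [(hα i).2]⟩
  have hhalf : α 0 / 2 + α 1 / 2 + α 2 / 2 + α 3 / 2 = π := by linarith
  simp only [ht]
  exact ⟨tan_mul_add_tan_mul_add_tan_mul_sub_one_pos (hcos 0) (hcos 1) (hcos 2) (hcos 3) hhalf,
    tan_eq_of_add_add_add_eq_pi (hcos 0).ne' (hcos 1).ne' (hcos 2).ne' hhalf⟩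
end

section
/- Let P be a polygon with vertices p₁,…,pₙ and f : closure(P) → ℝ² a barycentric mapping to a polygon with vertices q₁,…,qₙ (so f is piecewise linear on ∂P, mapping the edge [pᵢ, pᵢ₊₁] affinely onto [qᵢ, qᵢ₊₁]). If f is differentiable at the vertex pᵢ, then J(f)(pᵢ) = A(q_{i-1}, qᵢ, q_{i+1}) / A(p_{i-1}, pᵢ, p_{i+1}), where A denotes the signed area of a triangle and assuming A(p_{i-1}, pᵢ, p_{i+1}) ≠ 0. -/
/-- The 2D cross product of two vectors in `ℝ²`. -/
def cross (a b : ℝ × ℝ) : ℝ := a.1 * b.2 - a.2 * b.1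

/-- The signed area of the triangle `[p, q, r]` in `ℝ²`. -/
noncomputable def triArea (p q r : ℝ × ℝ) : ℝ := (1 / 2) * cross (q - p) (r - q)

/-- One-sided directional derivative along a segment: if `f (p + s • d) = q + s • e`
for `s ∈ [0,1]` and `f` has derivative `L` at `p`, then `L d = e`. -/
lemma dir_deriv (f : ℝ × ℝ → ℝ × ℝ) (L : ℝ × ℝ →L[ℝ] ℝ × ℝ) (p q d e : ℝ × ℝ)
    (hf : HasFDerivAt f L p)
    (h : ∀ s ∈ Set.Icc (0 : ℝ) 1, f (p + s • d) = q + s • e) : L d = e := by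
  have hg : ∀ s : ℝ, HasDerivAt (fun s : ℝ => p + s • d) d s := by
    intro s
    simpa using ((hasDerivAt_id s).smul_const d).const_add p
  have h0 : (fun s : ℝ => p + s • d) 0 = p := by simp
  have hcomp : HasDerivAt (fun s : ℝ => f (p + s • d)) (L d) 0 := by
    have hf' : HasFDerivAt f L (p + (0:ℝ) • d) := by simpa using hf
    exact hf'.comp_hasDerivAt 0 (hg 0)
  have hcompW : HasDerivWithinAt (fun s : ℝ => f (p + s • d)) (L d) (Set.Icc 0 1) 0 :=
    hcomp.hasDerivWithinAt
  have hlin : HasDerivWithinAt (fun s : ℝ => q + s • e) e (Set.Icc (0:ℝ) 1) 0 := by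
    have : ∀ s : ℝ, HasDerivAt (fun s : ℝ => q + s • e) e s := by
      intro s; simpa using ((hasDerivAt_id s).smul_const e).const_add q
    exact (this 0).hasDerivWithinAt
  have hcongr : HasDerivWithinAt (fun s : ℝ => f (p + s • d)) e (Set.Icc (0:ℝ) 1) 0 := by
    refine hlin.congr (fun s hs => (h s hs)) ?_
    simpa using h 0 (by norm_num)
  have hu : UniqueDiffWithinAt ℝ (Set.Icc (0:ℝ) 1) 0 :=
    uniqueDiffOn_Icc (by norm_num) 0 (by norm_num)
  have := hcompW.derivWithin hu
  rw [hcongr.derivWithin hu] at this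
  exact this.symm

/-- Jacobian of a barycentric mapping at a vertex: if `f` is differentiable at the
vertex `p₁` (with derivative `L`) and maps the edges `[p₀,p₁]`, `[p₁,p₂]` affinely onto
`[q₀,q₁]`, `[q₁,q₂]`, then `J(f)(p₁) = A(q₀,q₁,q₂) / A(p₀,p₁,p₂)`, provided
`A(p₀,p₁,p₂) ≠ 0`. -/
theorem stmt7 (p₀ p₁ p₂ q₀ q₁ q₂ : ℝ × ℝ) (f : ℝ × ℝ → ℝ × ℝ)
    (L : ℝ × ℝ →L[ℝ] ℝ × ℝ) (hf : HasFDerivAt f L p₁)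
    (hedge1 : ∀ μ ∈ Set.Icc (0 : ℝ) 1, f ((1 - μ) • p₀ + μ • p₁) = (1 - μ) • q₀ + μ • q₁)
    (hedge2 : ∀ μ ∈ Set.Icc (0 : ℝ) 1, f ((1 - μ) • p₁ + μ • p₂) = (1 - μ) • q₁ + μ • q₂)
    (hA : triArea p₀ p₁ p₂ ≠ 0) :
    cross (L (1, 0)) (L (0, 1)) = triArea q₀ q₁ q₂ / triArea p₀ p₁ p₂ := by
  -- derivative along edge back to p₀
  have h1 : L (p₀ - p₁) = q₀ - q₁ := by
    apply dir_deriv f L p₁ q₁ _ _ hf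
    intro s hs
    have hs' : (1 - s) ∈ Set.Icc (0:ℝ) 1 := ⟨by linarith [hs.2], by linarith [hs.1]⟩
    have := hedge1 (1 - s) hs'
    have harg : (1 - (1 - s)) • p₀ + (1 - s) • p₁ = p₁ + s • (p₀ - p₁) := by
      simp only [sub_sub_cancel]; module
    have hval : (1 - (1 - s)) • q₀ + (1 - s) • q₁ = q₁ + s • (q₀ - q₁) := by
      simp only [sub_sub_cancel]; module
    rw [harg, hval] at this
    exact this
  have h2 : L (p₂ - p₁) = q₂ - q₁ := by
    apply dir_deriv f L p₁ q₁ _ _ hf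
    intro s hs
    have := hedge2 s hs
    have harg : (1 - s) • p₁ + s • p₂ = p₁ + s • (p₂ - p₁) := by module
    have hval : (1 - s) • q₁ + s • q₂ = q₁ + s • (q₂ - q₁) := by module
    rw [harg, hval] at this
    exact this
  -- express L on the basis
  set a := L (1, 0) with ha
  set b := L (0, 1) with hb
  have hdecomp : ∀ v : ℝ × ℝ, L v = v.1 • a + v.2 • b := by
    intro v
    have : v = v.1 • ((1:ℝ), (0:ℝ)) + v.2 • ((0:ℝ), (1:ℝ)) := by
      ext <;> simp
    rw [ha, hb, ← L.map_smul, ← L.map_smul, ← L.map_add, ← this]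
  have e1 := hdecomp (p₀ - p₁)
  have e2 := hdecomp (p₂ - p₁)
  rw [h1] at e1
  rw [h2] at e2
  have hq1 : (q₀ - q₁).1 = (p₀ - p₁).1 * a.1 + (p₀ - p₁).2 * b.1 := by
    rw [e1]; simp
  have hq2 : (q₀ - q₁).2 = (p₀ - p₁).1 * a.2 + (p₀ - p₁).2 * b.2 := by
    rw [e1]; simp
  have hq3 : (q₂ - q₁).1 = (p₂ - p₁).1 * a.1 + (p₂ - p₁).2 * b.1 := by
    rw [e2]; simp
  have hq4 : (q₂ - q₁).2 = (p₂ - p₁).1 * a.2 + (p₂ - p₁).2 * b.2 := by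
    rw [e2]; simp
  have hAp : triArea p₀ p₁ p₂ =
      (1/2) * ((p₁.1 - p₀.1) * (p₂.2 - p₁.2) - (p₁.2 - p₀.2) * (p₂.1 - p₁.1)) := by
    simp [triArea, cross]
  have hAq : triArea q₀ q₁ q₂ =
      (1/2) * ((q₁.1 - q₀.1) * (q₂.2 - q₁.2) - (q₁.2 - q₀.2) * (q₂.1 - q₁.1)) := by
    simp [triArea, cross]
  have h1' : q₀.1 - q₁.1 = (p₀.1 - p₁.1) * a.1 + (p₀.2 - p₁.2) * b.1 := by simpa using hq1
  have h2' : q₀.2 - q₁.2 = (p₀.1 - p₁.1) * a.2 + (p₀.2 - p₁.2) * b.2 := by simpa using hq2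
  have h3' : q₂.1 - q₁.1 = (p₂.1 - p₁.1) * a.1 + (p₂.2 - p₁.2) * b.1 := by simpa using hq3
  have h4' : q₂.2 - q₁.2 = (p₂.1 - p₁.1) * a.2 + (p₂.2 - p₁.2) * b.2 := by simpa using hq4
  rw [eq_div_iff hA]
  rw [hAp, hAq] at *
  simp only [cross]
  have e1 : q₁.1 - q₀.1 = -(q₀.1 - q₁.1) := by ring
  have e2 : q₁.2 - q₀.2 = -(q₀.2 - q₁.2) := by ring
  rw [e1, e2, h1', h2', h3', h4']
  ring
end

section
/- Let φ₁,…,φₙ : U → ℝ be C¹ functions on an open subset U ⊆ ℝ² with Σφᵢ = 1, and let q₁,…,qₙ ∈ ℝ². Define f = Σ φᵢ qᵢ. Then J(f)(x) = 2 · Σ_{1 ≤ i < j < k ≤ n} D(φᵢ, φⱼ, φ_k)(x) · A(qᵢ, qⱼ, q_k), where D(a,b,c) is the 3×3 determinant with rows (a,b,c), (a_x,b_x,c_x), (a_y,b_y,c_y), and A is the signed triangle area. -/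
/-- `D(a,b,c)(x)` is the determinant of the 3×3 matrix whose rows are the function
values and the `x`- and `y`-partial derivatives at `x`. -/
noncomputable def Dfun (a b c : ℝ × ℝ → ℝ) (x : ℝ × ℝ) : ℝ :=
  Matrix.det !![a x, b x, c x;
    fderiv ℝ a x (1, 0), fderiv ℝ b x (1, 0), fderiv ℝ c x (1, 0);
    fderiv ℝ a x (0, 1), fderiv ℝ b x (0, 1), fderiv ℝ c x (0, 1)]

/-!
Put the values and the two partial derivatives of the `φᵢ` at `x` into the rows of a `3 × n`
matrix `M`, and the rows `1, qᵢ.1, qᵢ.2` into a `3 × n` matrix `N`. Since `∑ φᵢ = 1` near `x`, hence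
`∑ ∂φᵢ = 0`, the first column of `M Nᵀ` is `(1, 0, 0)`, so `det (M Nᵀ)` is the Jacobian of `f`.
The Cauchy–Binet formula expands `det (M Nᵀ)` as `∑_{i<j<k} det M_{ijk} det N_{ijk}`, and
`det N_{ijk} = 2 A(qᵢ, qⱼ, q_k)`.
-/

open Finset Function Matrix Equiv Filter Topology

section Derivatives

variable {𝕜 E F ι : Type*} [NontriviallyNormedField 𝕜] [NormedAddCommGroup E] [NormedSpace 𝕜 E]
  [NormedAddCommGroup F] [NormedSpace 𝕜 F] [Fintype ι] {φ : ι → E → 𝕜} {x : E}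

theorem fderiv_sum_smul_const_apply (q : ι → F) (hφ : ∀ i, DifferentiableAt 𝕜 (φ i) x) (v : E) :
    fderiv 𝕜 (fun y => ∑ i, φ i y • q i) x v = ∑ i, fderiv 𝕜 (φ i) x v • q i := by
  rw [fderiv_fun_sum fun i _ => (hφ i).smul_const (q i), _root_.sum_apply]
  exact sum_congr rfl fun i _ => by
    rw [fderiv_smul_const (hφ i), ContinuousLinearMap.smulRight_apply]

theorem sum_fderiv_apply_eq_zero_of_eventually_sum_eq (hφ : ∀ i, DifferentiableAt 𝕜 (φ i) x)
    {c : 𝕜} (hc : ∀ᶠ y in 𝓝 x, ∑ i, φ i y = c) (v : E) :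
    ∑ i, fderiv 𝕜 (φ i) x v = 0 := by
  rw [← _root_.sum_apply, ← fderiv_fun_sum fun i _ => hφ i,
    EventuallyEq.fderiv_eq (f₁ := fun y => ∑ i, φ i y) (f := fun _ => c) hc, fderiv_const_apply,
    _root_.zero_apply]

end Derivatives

section CauchyBinet

variable {ι : Type*} [LinearOrder ι] {k : ℕ}

theorem strictMono_comp_perm_iff {t : Fin k → ι} (ht : Injective t) {σ : Perm (Fin k)} :
    StrictMono (t ∘ σ) ↔ σ = Tuple.sort t := by
  constructor
  · intro h
    ext i
    exact congrArg Fin.val <| ht <|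
      congrFun (Tuple.unique_monotone h.monotone (Tuple.monotone_sort t)) i
  · rintro rfl
    exact (Tuple.monotone_sort t).strictMono_of_injective (ht.comp (Tuple.sort t).injective)

variable [Fintype ι]

theorem sum_eq_sum_perm_sum_strictMono {M : Type*} [AddCommMonoid M] (F : (Fin k → ι) → M)
    (hF : ∀ t, ¬Injective t → F t = 0) :
    ∑ t, F t = ∑ σ : Perm (Fin k), ∑ t with StrictMono t, F (t ∘ σ) := by
  calc ∑ t, F t = ∑ t, ∑ σ : Perm (Fin k), if StrictMono (t ∘ ⇑σ⁻¹) then F t else 0 := by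
        refine sum_congr rfl fun t _ => ?_
        by_cases ht : Injective t
        · simp_rw [strictMono_comp_perm_iff ht, inv_eq_iff_eq_inv, sum_ite_eq', mem_univ, if_true]
        · simp [hF t ht]
    _ = ∑ σ : Perm (Fin k), ∑ t, if StrictMono (t ∘ ⇑σ⁻¹) then F t else 0 := sum_comm
    _ = ∑ σ : Perm (Fin k), ∑ t with StrictMono t, F (t ∘ σ) := by
        refine sum_congr rfl fun σ _ => ?_
        rw [sum_filter]
        refine (Fintype.sum_equiv (σ.symm.arrowCongr (Equiv.refl ι)) _ _ fun t => ?_).symm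
        change _ = if StrictMono ((t ∘ σ) ∘ ⇑σ⁻¹) then F (t ∘ σ) else 0
        rw [comp_assoc, ← Perm.coe_mul, mul_inv_cancel, Perm.coe_one, comp_id]

variable {R : Type*} [CommRing R]

omit [LinearOrder ι] in
theorem det_mul_transpose_eq_sum_prod_mul_det (M N : Matrix (Fin k) ι R) :
    (M * Nᵀ).det = ∑ t : Fin k → ι, (∏ i, N i (t i)) * (M.submatrix id t).det := by
  simp only [det_apply', mul_apply, transpose_apply, prod_univ_sum, Fintype.piFinset_univ,
    mul_sum, submatrix_apply, id]
  rw [sum_comm]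
  refine sum_congr rfl fun t _ => sum_congr rfl fun σ _ => ?_
  rw [prod_mul_distrib]
  ring

theorem det_mul_transpose_eq_sum_strictMono (M N : Matrix (Fin k) ι R) :
    (M * Nᵀ).det =
      ∑ t with StrictMono t, (M.submatrix id t).det * (N.submatrix id t).det := by
  rw [det_mul_transpose_eq_sum_prod_mul_det, sum_eq_sum_perm_sum_strictMono, sum_comm]
  · refine sum_congr rfl fun t _ => ?_
    rw [← det_transpose (N.submatrix id t), det_apply' (N.submatrix id t)ᵀ, mul_sum]
    refine sum_congr rfl fun σ _ => ?_
    rw [show M.submatrix id (t ∘ σ) = (M.submatrix id t).submatrix id σ from rfl, det_permute']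
    simp only [Function.comp_apply, transpose_apply, submatrix_apply, id]
    ring
  · intro t ht
    obtain ⟨i, j, hij, hne⟩ : ∃ i j, t i = t j ∧ i ≠ j := by
      simpa [Injective] using ht
    rw [det_zero_of_column_eq hne fun r => by simp [hij], mul_zero]

theorem sum_strictMono_fin_three {M : Type*} [AddCommMonoid M] (F : (Fin 3 → ι) → M) :
    ∑ t with StrictMono t, F t =
      ∑ s : ι × ι × ι with s.1 < s.2.1 ∧ s.2.1 < s.2.2, F ![s.1, s.2.1, s.2.2] := by
  refine sum_nbij' (fun t => (t 0, t 1, t 2)) (fun s => ![s.1, s.2.1, s.2.2]) ?_ ?_ ?_ ?_ ?_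
  · simp [Fin.strictMono_iff_lt_succ, Fin.forall_fin_two]
  · simp [Fin.strictMono_iff_lt_succ, Fin.forall_fin_two]
  · intro t _
    ext i
    fin_cases i <;> rfl
  · intro s _
    rfl
  · intro t _
    congr
    ext i
    fin_cases i <;> rfl

end CauchyBinet

theorem cross_sum_smul_eq_two_mul_sum {ι : Type*} [Fintype ι] [LinearOrder ι]
    (a b c : ι → ℝ) (q : ι → ℝ × ℝ) (ha : ∑ i, a i = 1) (hb : ∑ i, b i = 0)
    (hc : ∑ i, c i = 0) :
    cross (∑ i, b i • q i) (∑ i, c i • q i) =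
      2 * ∑ s : ι × ι × ι with s.1 < s.2.1 ∧ s.2.1 < s.2.2,
        !![a s.1, a s.2.1, a s.2.2; b s.1, b s.2.1, b s.2.2; c s.1, c s.2.1, c s.2.2].det *
          triArea (q s.1) (q s.2.1) (q s.2.2) := by
  set M : Matrix (Fin 3) ι ℝ := of ![a, b, c]
  set N : Matrix (Fin 3) ι ℝ := of ![1, fun i => (q i).1, fun i => (q i).2]
  have hMN : cross (∑ i, b i • q i) (∑ i, c i • q i) = (M * Nᵀ).det := by
    simp only [det_fin_three, mul_apply, transpose_apply, M, N, of_apply, cons_val_zero,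
      cons_val_one, cons_val_two, Pi.one_apply, mul_one, ha, hb]
    simp [cross, Prod.fst_sum, Prod.snd_sum, hc]
  rw [hMN, det_mul_transpose_eq_sum_strictMono, sum_strictMono_fin_three, mul_sum]
  refine sum_congr rfl fun s _ => ?_
  simp [det_fin_three, M, N, triArea, cross]
  ring

/-- Jacobian formula for a barycentric mapping built from a `C¹` partition of unity:
`J(f)(x) = 2 ∑_{i<j<k} D(φᵢ,φⱼ,φ_k)(x) A(qᵢ,qⱼ,q_k)`, where `f = ∑ φᵢ qᵢ`. -/
theorem stmt8 (n : ℕ) (U : Set (ℝ × ℝ)) (hU : IsOpen U)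
    (φ : Fin n → (ℝ × ℝ) → ℝ) (hφ : ∀ i, ContDiffOn ℝ 1 (φ i) U)
    (hpart : ∀ y ∈ U, ∑ i, φ i y = 1)
    (q : Fin n → ℝ × ℝ) (x : ℝ × ℝ) (hx : x ∈ U) :
    cross (fderiv ℝ (fun y => ∑ i, φ i y • q i) x (1, 0))
        (fderiv ℝ (fun y => ∑ i, φ i y • q i) x (0, 1)) =
      2 * ∑ s ∈ Finset.univ.filter
          (fun s : Fin n × Fin n × Fin n => s.1 < s.2.1 ∧ s.2.1 < s.2.2),
        Dfun (φ s.1) (φ s.2.1) (φ s.2.2) x * triArea (q s.1) (q s.2.1) (q s.2.2) := by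
  have hdiff : ∀ i, DifferentiableAt ℝ (φ i) x := fun i =>
    ((hφ i).contDiffAt (hU.mem_nhds hx)).differentiableAt one_ne_zero
  have hsum : ∀ᶠ y in 𝓝 x, ∑ i, φ i y = 1 := eventually_of_mem (hU.mem_nhds hx) hpart
  rw [fderiv_sum_smul_const_apply q hdiff, fderiv_sum_smul_const_apply q hdiff]
  exact cross_sum_smul_eq_two_mul_sum (fun i => φ i x) (fun i => fderiv ℝ (φ i) x (1, 0))
    (fun i => fderiv ℝ (φ i) x (0, 1)) q (hpart x hx)
    (sum_fderiv_apply_eq_zero_of_eventually_sum_eq hdiff hsum _)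
    (sum_fderiv_apply_eq_zero_of_eventually_sum_eq hdiff hsum _)
end

section
/- Let w₁,…,wₙ : U → ℝ be C¹ and positive on an open set U ⊆ ℝ², W := Σwᵢ, and φᵢ := wᵢ/W. Then for any indices i, j, k, D(φᵢ, φⱼ, φ_k) = D(wᵢ, wⱼ, w_k)/W³, where D(a,b,c) := det[[a,b,c],[a_x,b_x,c_x],[a_y,b_y,c_y]]. -/
/- By the product rule the matrix of `(g a, g b, g c)` is the matrix of `(a, b, c)` multiplied
on the left by the lower-triangular matrix `!![g, 0, 0; g_x, g, 0; g_y, 0, g]`. -/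
theorem Dfun_mul_left {g a b c : ℝ × ℝ → ℝ} {x : ℝ × ℝ} (hg : DifferentiableAt ℝ g x)
    (ha : DifferentiableAt ℝ a x) (hb : DifferentiableAt ℝ b x) (hc : DifferentiableAt ℝ c x) :
    Dfun (fun y => g y * a y) (fun y => g y * b y) (fun y => g y * c y) x =
      g x ^ 3 * Dfun a b c x := by
  simp only [Dfun, fderiv_fun_mul hg ha, fderiv_fun_mul hg hb, fderiv_fun_mul hg hc,
    Matrix.det_fin_three, Matrix.of_apply, Matrix.cons_val', Matrix.cons_val_zero,
    Matrix.cons_val_one, Matrix.cons_val_two, Matrix.empty_val', Matrix.cons_val_fin_one,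
    Matrix.head_cons, Matrix.head_fin_const, Matrix.tail_cons, add_apply,
    smul_apply, smul_eq_mul]
  ring

theorem stmt9_general (n : ℕ) (U : Set (ℝ × ℝ)) (hU : IsOpen U) (w : Fin n → (ℝ × ℝ) → ℝ)
    (hw : ∀ i, ContDiffOn ℝ 1 (w i) U)
    (x : ℝ × ℝ) (hx : x ∈ U) (i j k : Fin n) :
    Dfun (fun y => w i y / ∑ l, w l y) (fun y => w j y / ∑ l, w l y)
        (fun y => w k y / ∑ l, w l y) x =
      Dfun (w i) (w j) (w k) x / (∑ l, w l x) ^ 3 := by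
  have hdiff : ∀ m, DifferentiableAt ℝ (w m) x := fun m =>
    ((hw m).contDiffAt (hU.mem_nhds hx)).differentiableAt one_ne_zero
  by_cases hW : ∑ l, w l x = 0
  · -- with `x / 0 = 0` the first row of the left-hand matrix vanishes
    simp [Dfun, Matrix.det_fin_three, hW]
  have hWinv : DifferentiableAt ℝ (fun y => (∑ l, w l y)⁻¹) x :=
    (DifferentiableAt.fun_sum fun m _ => hdiff m).inv hW
  simp only [div_eq_inv_mul]
  rw [Dfun_mul_left hWinv (hdiff i) (hdiff j) (hdiff k), inv_pow]

/-- Normalization lemma: if `wᵢ` are positive `C¹` weights with sum `W` and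
`φᵢ = wᵢ / W`, then `D(φᵢ,φⱼ,φ_k) = D(wᵢ,wⱼ,w_k) / W³`. -/
theorem stmt9 (n : ℕ) (U : Set (ℝ × ℝ)) (hU : IsOpen U) (w : Fin n → (ℝ × ℝ) → ℝ)
    (hw : ∀ i, ContDiffOn ℝ 1 (w i) U) (hpos : ∀ i, ∀ y ∈ U, 0 < w i y)
    (x : ℝ × ℝ) (hx : x ∈ U) (i j k : Fin n) :
    Dfun (fun y => w i y / ∑ l, w l y) (fun y => w j y / ∑ l, w l y)
        (fun y => w k y / ∑ l, w l y) x =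
      Dfun (w i) (w j) (w k) x / (∑ l, w l x) ^ 3 :=
  stmt9_general n U hU w hw x hx i j k
end

section
/- Let t₁, t₂, t₃, t₄ be the half-angle tangents of angles α₁,…,α₄ ∈ (−π, π) with Σαᵢ = 2π, and let s₂ = sin α₂, s₃ = sin α₃. Then −(t₃ + t₄)s₃ + (t₄ + t₁)·sin(α₁ + α₂) + (t₁ + t₂)s₂ = 0. -/
/-!
With `βᵢ = αᵢ / 2` we have `Σ βᵢ = π` and `tᵢ + tⱼ = sin (βᵢ + βⱼ) / (cos βᵢ cos βⱼ)`.
Since `β₃ + β₄ = π - (β₁ + β₂)`, the common factor `2 sin (β₁ + β₂)` comes out of all three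
terms, and after clearing `cos β₁ cos β₄ = -cos β₁ cos (β₁ + β₂ + β₃)` what remains is the
product-to-sum identity `sin (y + z) cos (x + y) = sin z cos x + sin y cos (x + y + z)`.
-/

open Real

theorem Real.tan_add_tan_eq_sin_add_div {x y : ℝ} (hx : cos x ≠ 0) (hy : cos y ≠ 0) :
    tan x + tan y = sin (x + y) / (cos x * cos y) := by
  rw [tan_eq_sin_div_cos, tan_eq_sin_div_cos, sin_add]
  field_simp

theorem Real.sin_add_mul_cos_add (x y z : ℝ) :
    sin (y + z) * cos (x + y) = sin z * cos x + sin y * cos (x + y + z) := by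
  simp only [sin_add, cos_add]
  linear_combination (sin z * cos x) * sin_sq_add_cos_sq y

theorem tan_sin_identity_of_sum_eq_pi {b₁ b₂ b₃ b₄ : ℝ} (hsum : b₁ + b₂ + b₃ + b₄ = π)
    (hc₁ : cos b₁ ≠ 0) (hc₂ : cos b₂ ≠ 0) (hc₃ : cos b₃ ≠ 0) (hc₄ : cos b₄ ≠ 0) :
    -(tan b₃ + tan b₄) * sin (2 * b₃) + (tan b₄ + tan b₁) * sin (2 * b₁ + 2 * b₂) +
      (tan b₁ + tan b₂) * sin (2 * b₂) = 0 := by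
  have hb₄ : b₄ = π - (b₁ + b₂ + b₃) := by linarith
  have h34 : sin (b₃ + b₄) = sin (b₁ + b₂) := by
    rw [hb₄, ← sin_pi_sub]; ring_nf
  have h41 : sin (b₄ + b₁) = sin (b₂ + b₃) := by
    rw [hb₄, ← sin_pi_sub]; ring_nf
  have hcos₄ : cos b₄ = -cos (b₁ + b₂ + b₃) := by rw [hb₄, cos_pi_sub]
  rw [tan_add_tan_eq_sin_add_div hc₃ hc₄, tan_add_tan_eq_sin_add_div hc₄ hc₁,
    tan_add_tan_eq_sin_add_div hc₁ hc₂, h34, h41, ← mul_add, sin_two_mul, sin_two_mul,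
    sin_two_mul]
  field_simp
  rw [hcos₄]
  linear_combination 2 * sin (b₁ + b₂) * sin_add_mul_cos_add b₁ b₂ b₃

/-- Vanishing of the quantity `K` in the proof of Theorem 3 of the paper: for angles
`α₁,…,α₄ ∈ (-π, π)` with `Σ αᵢ = 2π` and `tᵢ = tan(αᵢ/2)`,
`-(t₃ + t₄) sin α₃ + (t₄ + t₁) sin(α₁ + α₂) + (t₁ + t₂) sin α₂ = 0`. -/
theorem stmt16 (α₁ α₂ α₃ α₄ : ℝ)
    (h1 : α₁ ∈ Set.Ioo (-π) π) (h2 : α₂ ∈ Set.Ioo (-π) π)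
    (h3 : α₃ ∈ Set.Ioo (-π) π) (h4 : α₄ ∈ Set.Ioo (-π) π)
    (hsum : α₁ + α₂ + α₃ + α₄ = 2 * π)
    (t₁ t₂ t₃ t₄ : ℝ)
    (ht₁ : t₁ = Real.tan (α₁ / 2)) (ht₂ : t₂ = Real.tan (α₂ / 2))
    (ht₃ : t₃ = Real.tan (α₃ / 2)) (ht₄ : t₄ = Real.tan (α₄ / 2)) :
    -(t₃ + t₄) * Real.sin α₃ + (t₄ + t₁) * Real.sin (α₁ + α₂) +
      (t₁ + t₂) * Real.sin α₂ = 0 := by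
  have hcos {α : ℝ} (h : α ∈ Set.Ioo (-π) π) : cos (α / 2) ≠ 0 :=
    (cos_pos_of_mem_Ioo ⟨by linarith [h.1], by linarith [h.2]⟩).ne'
  have key := tan_sin_identity_of_sum_eq_pi (b₄ := α₄ / 2) (by linarith)
    (hcos h1) (hcos h2) (hcos h3) (hcos h4)
  simp only [mul_div_cancel₀ _ (two_ne_zero' ℝ)] at key
  rwa [ht₁, ht₂, ht₃, ht₄]
end
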